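/- Let α ∈ (0,1), T > 0, p′ > 1, let H be a real Hilbert space, and let g : (0,T) → H be Bochner measurable with ∫₀^T ‖g(t)‖_H^{p′} dt < ∞. Define for θ ∈ (0,1) and t ∈ (0,T) the mode ũ(t,θ) = −c₀(θ) ∫₀ᵗ e^{−c₁(θ)(t−s)} g(s) ds. Then sup_{θ∈(0,1)} ∫₀^T ‖ũ(t,θ)‖_H^{p′} dt ≤ (T+1)^{p′} · ∫₀^T ‖g(t)‖_H^{p′} dt, i.e. ũ ∈ L^∞(0,1; L^{p′}(0,T; H)) with norm at most (T+1)·‖g‖_{L^{p′}(0,T;H)}. -/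

import Mathlib

/-!
The mode is the convolution on `(0,T)` of `g` with the kernel `K_θ(u) = -c₀ e^{-c₁ u}`, where
`c₀ = 1/(1-θ)` and `c₁ = θ/(1-θ)`. Young's inequality `‖K * g‖_p ≤ ‖K‖₁ ‖g‖_p`, which follows
from the weighted Hölder inequality `(∫ w f)^p ≤ (∫ w)^(p-1) ∫ w f^p` and Tonelli, reduces the
claim to `‖K_θ‖_{L¹(0,T)} ≤ T + 1`. Bounding the exponential by `1`, resp. integrating it over
`(0,∞)`, gives `‖K_θ‖_{L¹(0,T)} ≤ min (T/(1-θ)) (1/θ)`; the first term is `≤ T + 1` when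
`θ (T + 1) ≤ 1`, the second otherwise.
-/

open MeasureTheory Set
open scoped ENNReal

theorem ENNReal.rpow_lintegral_mul_le {α : Type*} [MeasurableSpace α] {μ : Measure α} {p : ℝ}
    (hp : 1 ≤ p) {w f : α → ℝ≥0∞} (hw : AEMeasurable w μ) (hf : AEMeasurable f μ) :
    (∫⁻ a, w a * f a ∂μ) ^ p ≤ (∫⁻ a, w a ∂μ) ^ (p - 1) * ∫⁻ a, w a * f a ^ p ∂μ := by
  rcases hp.eq_or_lt with rfl | hp
  · simp
  have hpq : p.HolderConjugate p.conjExponent := .conjExponent hp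
  set q := p.conjExponent
  have hsplit : ∀ a, w a * f a = w a ^ (1 / p) * f a * w a ^ (1 / q) := fun a => by
    rw [mul_right_comm, ← ENNReal.rpow_add_of_nonneg _ _ hpq.one_div_nonneg
      hpq.symm.one_div_nonneg, hpq.one_div_add_one_div, one_div_one, ENNReal.rpow_one]
  have holder := ENNReal.lintegral_mul_le_Lp_mul_Lq μ hpq
    ((hw.pow_const (1 / p)).mul hf) (hw.pow_const (1 / q))
  simp only [Pi.mul_apply, ← hsplit, ENNReal.mul_rpow_of_nonneg _ _ hpq.nonneg,
    ← ENNReal.rpow_mul, one_div_mul_cancel hpq.ne_zero, one_div_mul_cancel hpq.symm.ne_zero,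
    ENNReal.rpow_one] at holder
  calc (∫⁻ a, w a * f a ∂μ) ^ p
      ≤ ((∫⁻ a, w a * f a ^ p ∂μ) ^ (1 / p) * (∫⁻ a, w a ∂μ) ^ (1 / q)) ^ p :=
        ENNReal.rpow_le_rpow holder hpq.nonneg
    _ = (∫⁻ a, w a ∂μ) ^ (p - 1) * ∫⁻ a, w a * f a ^ p ∂μ := by
        rw [ENNReal.mul_rpow_of_nonneg _ _ hpq.nonneg, ← ENNReal.rpow_mul, ← ENNReal.rpow_mul,
          one_div_mul_cancel hpq.ne_zero, ENNReal.rpow_one, mul_comm, one_div_mul_eq_div,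
          hpq.div_conj_eq_sub_one]

theorem lintegral_rpow_lintegral_conv_le {G : Type*} [AddCommGroup G] [MeasurableSpace G]
    [MeasurableAdd₂ G] [MeasurableNeg G] (μ : Measure G) [SFinite μ] [μ.IsAddLeftInvariant]
    [μ.IsNegInvariant] {p : ℝ} (hp : 1 ≤ p) {k h : G → ℝ≥0∞} (hk : Measurable k)
    (hh : AEMeasurable h μ) :
    ∫⁻ t, (∫⁻ s, k (t - s) * h s ∂μ) ^ p ∂μ ≤ (∫⁻ u, k u ∂μ) ^ p * ∫⁻ s, h s ^ p ∂μ := by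
  set K := ∫⁻ u, k u ∂μ
  have hK_left : ∀ t, ∫⁻ s, k (t - s) ∂μ = K := fun t =>
    (Measure.measurePreserving_sub_left μ t).lintegral_comp hk
  have hK_right : ∀ s, ∫⁻ t, k (t - s) * h s ^ p ∂μ = K * h s ^ p := fun s => by
    rw [lintegral_mul_const _ (by fun_prop),
      (measurePreserving_sub_right μ s).lintegral_comp hk]
  have hF : AEMeasurable (fun z : G × G => k (z.1 - z.2) * h z.2 ^ p) (μ.prod μ) :=
    (hk.comp measurable_sub).aemeasurable.mul
      ((hh.pow_const p).comp_quasiMeasurePreserving Measure.quasiMeasurePreserving_snd)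
  calc ∫⁻ t, (∫⁻ s, k (t - s) * h s ∂μ) ^ p ∂μ
      ≤ ∫⁻ t, K ^ (p - 1) * ∫⁻ s, k (t - s) * h s ^ p ∂μ ∂μ := lintegral_mono fun t => by
        simpa only [hK_left t] using
          ENNReal.rpow_lintegral_mul_le hp (w := fun s => k (t - s)) (by fun_prop) hh
    _ = K ^ (p - 1) * ∫⁻ s, ∫⁻ t, k (t - s) * h s ^ p ∂μ ∂μ := by
        rw [lintegral_const_mul'' _ hF.lintegral_prod_right', lintegral_lintegral_swap hF]
    _ = K ^ (p - 1 + 1) * ∫⁻ s, h s ^ p ∂μ := by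
        rw [lintegral_congr hK_right, lintegral_const_mul'' _ (hh.pow_const p), ← mul_assoc,
          ENNReal.rpow_add_of_nonneg _ _ (sub_nonneg.2 hp) zero_le_one, ENNReal.rpow_one]
    _ = K ^ p * ∫⁻ s, h s ^ p ∂μ := by rw [sub_add_cancel]

theorem lintegral_Ioo_enorm_integral_conv_rpow_le {E : Type*} [NormedAddCommGroup E]
    [NormedSpace ℝ E] {T p : ℝ} (hp : 1 ≤ p) {κ : ℝ → ℝ} (hκ : Measurable κ) {g : ℝ → E}
    (hg : AEStronglyMeasurable g (volume.restrict (Ioo 0 T))) :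
    ∫⁻ t in Ioo 0 T, ‖∫ s in Ioo 0 t, κ (t - s) • g s‖ₑ ^ p ≤
      (∫⁻ u in Ioo 0 T, ‖κ u‖ₑ) ^ p * ∫⁻ t in Ioo 0 T, ‖g t‖ₑ ^ p := by
  set k := (Ioo 0 T).indicator fun u => ‖κ u‖ₑ
  set h := (Ioo 0 T).indicator fun s => ‖g s‖ₑ
  have hconv : ∀ t ∈ Ioo 0 T, ‖∫ s in Ioo 0 t, κ (t - s) • g s‖ₑ ≤ ∫⁻ s, k (t - s) * h s := by
    intro t ht
    calc ‖∫ s in Ioo 0 t, κ (t - s) • g s‖ₑ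
        ≤ ∫⁻ s in Ioo 0 t, ‖κ (t - s)‖ₑ * ‖g s‖ₑ := by
          simpa only [enorm_smul] using enorm_integral_le_lintegral_enorm (fun s => κ (t - s) • g s)
      _ = ∫⁻ s, (Ioo 0 t).indicator (fun s => ‖κ (t - s)‖ₑ * ‖g s‖ₑ) s :=
          (lintegral_indicator measurableSet_Ioo _).symm
      _ ≤ ∫⁻ s, k (t - s) * h s := lintegral_mono fun s => by
          by_cases hs : s ∈ Ioo 0 t
          · have hts : t - s ∈ Ioo 0 T := ⟨by linarith [hs.2], by linarith [hs.1, ht.2]⟩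
            have hsT : s ∈ Ioo 0 T := ⟨hs.1, hs.2.trans ht.2⟩
            simp only [k, h, indicator_of_mem hs, indicator_of_mem hts, indicator_of_mem hsT,
              le_refl]
          · simp only [indicator_of_notMem hs, zero_le]
  have hh_rpow : (fun s => h s ^ p) = (Ioo 0 T).indicator fun s => ‖g s‖ₑ ^ p :=
    (indicator_comp_of_zero (g := fun x : ℝ≥0∞ => x ^ p)
      (ENNReal.zero_rpow_of_pos (by linarith))).symm
  calc ∫⁻ t in Ioo 0 T, ‖∫ s in Ioo 0 t, κ (t - s) • g s‖ₑ ^ p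
      ≤ ∫⁻ t in Ioo 0 T, (∫⁻ s, k (t - s) * h s) ^ p :=
        setLIntegral_mono' measurableSet_Ioo fun t ht =>
          ENNReal.rpow_le_rpow (hconv t ht) (by linarith)
    _ ≤ ∫⁻ t, (∫⁻ s, k (t - s) * h s) ^ p := setLIntegral_le_lintegral _ _
    _ ≤ (∫⁻ u, k u) ^ p * ∫⁻ s, h s ^ p :=
        lintegral_rpow_lintegral_conv_le volume hp (hκ.enorm.indicator measurableSet_Ioo)
          ((aemeasurable_indicator_iff measurableSet_Ioo).2 hg.enorm)
    _ = (∫⁻ u in Ioo 0 T, ‖κ u‖ₑ) ^ p * ∫⁻ t in Ioo 0 T, ‖g t‖ₑ ^ p := by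
        rw [lintegral_indicator measurableSet_Ioo, hh_rpow, lintegral_indicator measurableSet_Ioo]

theorem lintegral_Ioo_ofReal_mul_exp_le_mul {c₀ c₁ : ℝ} (hc₀ : 0 ≤ c₀) (hc₁ : 0 ≤ c₁) (T : ℝ) :
    ∫⁻ u in Ioo 0 T, ENNReal.ofReal (c₀ * Real.exp (-c₁ * u)) ≤ ENNReal.ofReal (c₀ * T) :=
  calc ∫⁻ u in Ioo 0 T, ENNReal.ofReal (c₀ * Real.exp (-c₁ * u))
      ≤ ∫⁻ _ in Ioo 0 T, ENNReal.ofReal c₀ :=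
        setLIntegral_mono' measurableSet_Ioo fun u hu => ENNReal.ofReal_le_ofReal <|
          mul_le_of_le_one_right hc₀ (Real.exp_le_one_iff.2 (by nlinarith [hu.1]))
    _ = ENNReal.ofReal (c₀ * T) := by
        rw [setLIntegral_const, Real.volume_Ioo, sub_zero, ← ENNReal.ofReal_mul hc₀]

theorem lintegral_Ioo_ofReal_mul_exp_le_div {c₀ c₁ : ℝ} (hc₀ : 0 ≤ c₀) (hc₁ : 0 < c₁) (T : ℝ) :
    ∫⁻ u in Ioo 0 T, ENNReal.ofReal (c₀ * Real.exp (-c₁ * u)) ≤ ENNReal.ofReal (c₀ / c₁) := by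
  have hint : IntegrableOn (fun u => c₀ * Real.exp (-c₁ * u)) (Ioi 0) :=
    (exp_neg_integrableOn_Ioi 0 hc₁).const_mul c₀
  calc ∫⁻ u in Ioo 0 T, ENNReal.ofReal (c₀ * Real.exp (-c₁ * u))
      ≤ ∫⁻ u in Ioi 0, ENNReal.ofReal (c₀ * Real.exp (-c₁ * u)) :=
        lintegral_mono_set Ioo_subset_Ioi_self
    _ = ENNReal.ofReal (c₀ / c₁) := by
        rw [← ofReal_integral_eq_lintegral_ofReal hint (.of_forall fun u => by positivity),
          integral_const_mul, integral_exp_mul_Ioi (neg_lt_zero.2 hc₁)]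
        congr 1
        field_simp
        simp

noncomputable def modeKernel (θ u : ℝ) : ℝ := -(1 / (1 - θ)) * Real.exp (-(θ / (1 - θ)) * u)

theorem lintegral_Ioo_enorm_modeKernel_le {θ : ℝ} (hθ : θ ∈ Ioo (0 : ℝ) 1) (T : ℝ) :
    ∫⁻ u in Ioo 0 T, ‖modeKernel θ u‖ₑ ≤ ENNReal.ofReal (T + 1) := by
  obtain ⟨hθ₀, hθ₁⟩ := hθ
  have h1θ : 0 < 1 - θ := by linarith
  have hnorm : ∀ u, ‖modeKernel θ u‖ₑ =
      ENNReal.ofReal (1 / (1 - θ) * Real.exp (-(θ / (1 - θ)) * u)) := fun u => by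
    rw [modeKernel, neg_mul, enorm_neg, Real.enorm_eq_ofReal (by positivity)]
  simp_rw [hnorm]
  rcases le_total (θ * (T + 1)) 1 with hsmall | hlarge
  · refine (lintegral_Ioo_ofReal_mul_exp_le_mul (by positivity) (by positivity) T).trans
      (ENNReal.ofReal_le_ofReal ?_)
    rw [one_div_mul_eq_div, div_le_iff₀ h1θ]
    nlinarith
  · refine (lintegral_Ioo_ofReal_mul_exp_le_div (by positivity) (by positivity) T).trans
      (ENNReal.ofReal_le_ofReal ?_)
    rw [div_div_div_cancel_right₀ h1θ.ne', div_le_iff₀ hθ₀]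
    linarith

theorem ENNReal.ofReal_norm_rpow {E : Type*} [SeminormedAddGroup E] (x : E) {p : ℝ} (hp : 0 ≤ p) :
    ENNReal.ofReal (‖x‖ ^ p) = ‖x‖ₑ ^ p := by
  rw [← ENNReal.ofReal_rpow_of_nonneg (norm_nonneg x) hp, ofReal_norm]

theorem modes_Linfty_Lp_bound_general {H : Type*} [NormedAddCommGroup H] [InnerProductSpace ℝ H]
    (T p' : ℝ) (hT : 0 < T) (hp : 1 < p')
    (g : ℝ → H)
    (hmeas : AEStronglyMeasurable g (volume.restrict (Set.Ioo 0 T))) :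
    ∀ θ ∈ Set.Ioo (0:ℝ) 1,
      (∫⁻ t in Set.Ioo (0:ℝ) T, ENNReal.ofReal
          (‖-(1 / (1 - θ)) • ∫ s in Set.Ioo 0 t, Real.exp (-(θ / (1 - θ)) * (t - s)) • g s‖ ^ p'))
        ≤ ENNReal.ofReal ((T + 1) ^ p') *
            ∫⁻ t in Set.Ioo (0:ℝ) T, ENNReal.ofReal (‖g t‖ ^ p') := by
  intro θ hθ
  have hp₀ : 0 ≤ p' := by linarith
  have hmode : ∀ t, -(1 / (1 - θ)) • ∫ s in Ioo 0 t, Real.exp (-(θ / (1 - θ)) * (t - s)) • g s =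
      ∫ s in Ioo 0 t, modeKernel θ (t - s) • g s := fun t => by
    simp only [← integral_smul, smul_smul, modeKernel]
  simp only [hmode, ENNReal.ofReal_norm_rpow _ hp₀]
  calc ∫⁻ t in Ioo 0 T, ‖∫ s in Ioo 0 t, modeKernel θ (t - s) • g s‖ₑ ^ p'
      ≤ (∫⁻ u in Ioo 0 T, ‖modeKernel θ u‖ₑ) ^ p' * ∫⁻ t in Ioo 0 T, ‖g t‖ₑ ^ p' :=
        lintegral_Ioo_enorm_integral_conv_rpow_le hp.le (by unfold modeKernel; fun_prop) hmeas
    _ ≤ ENNReal.ofReal (T + 1) ^ p' * ∫⁻ t in Ioo 0 T, ‖g t‖ₑ ^ p' := by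
        gcongr
        exact lintegral_Ioo_enorm_modeKernel_le hθ T
    _ = ENNReal.ofReal ((T + 1) ^ p') * ∫⁻ t in Ioo 0 T, ‖g t‖ₑ ^ p' := by
        rw [ENNReal.ofReal_rpow_of_nonneg (by linarith) hp₀]

/-- Uniform-in-`θ` `L^{p'}(0,T;H)` bound on the modes: with
`ũ(t,θ) = -c₀(θ) ∫₀ᵗ e^{-c₁(θ)(t-s)} g(s) ds`, `c₀(θ) = 1/(1-θ)`, `c₁(θ) = θ/(1-θ)`,
for every `θ ∈ (0,1)`,
`∫₀ᵀ ‖ũ(t,θ)‖^{p'} dt ≤ (T+1)^{p'} ∫₀ᵀ ‖g(t)‖^{p'} dt`, i.e.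
`ũ ∈ L^∞(0,1; L^{p'}(0,T;H))` with norm at most `(T+1)·‖g‖_{L^{p'}(0,T;H)}`. -/
theorem modes_Linfty_Lp_bound {H : Type*} [NormedAddCommGroup H] [InnerProductSpace ℝ H]
    [CompleteSpace H]
    (α T p' : ℝ) (hα : α ∈ Set.Ioo (0:ℝ) 1) (hT : 0 < T) (hp : 1 < p')
    (g : ℝ → H)
    (hmeas : AEStronglyMeasurable g (volume.restrict (Set.Ioo 0 T)))
    (hint : (∫⁻ t in Set.Ioo (0:ℝ) T, ENNReal.ofReal (‖g t‖ ^ p')) < ⊤) :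
    ∀ θ ∈ Set.Ioo (0:ℝ) 1,
      (∫⁻ t in Set.Ioo (0:ℝ) T, ENNReal.ofReal
          (‖-(1 / (1 - θ)) • ∫ s in Set.Ioo 0 t, Real.exp (-(θ / (1 - θ)) * (t - s)) • g s‖ ^ p'))
        ≤ ENNReal.ofReal ((T + 1) ^ p') *
            ∫⁻ t in Set.Ioo (0:ℝ) T, ENNReal.ofReal (‖g t‖ ^ p') :=
  modes_Linfty_Lp_bound_general T p' hT hp g hmeas
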